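/- Strict composition for sequential types: if Γ ⊢ M : rev(ρ⃗) ⟹ σ⃗ and Γ ⊢ N : rev(σ⃗) ⟹ τ⃗, then Γ ⊢ M;N : rev(ρ⃗) ⟹ τ⃗. -/

import Mathlib

/-- Terms of the sequential λ-calculus in de Bruijn representation
(so terms are automatically identified up to α-equivalence):
nil `*`, variable prefix `x.M`, push/application `[N].M`,
and pop/abstraction `<x>.M`. -/
inductive STm : Type
  | star : STm
  | var  : Nat → STm → STm
  | push : STm → STm → STm
  | pop  : STm → STm

namespace STm

/-- Lifting of a renaming under a binder. -/
def liftF (f : Nat → Nat) : Nat → Nat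
  | 0 => 0
  | n+1 => f n + 1

/-- Renaming of de Bruijn indices. -/
def rename (f : Nat → Nat) : STm → STm
  | star => star
  | var n M => var (f n) (rename f M)
  | push N M => push (rename f N) (rename f M)
  | pop M => pop (rename (liftF f) M)

/-- Capture-avoiding composition `N ; M`. -/
def comp : STm → STm → STm
  | star, P => P
  | var n N, P => var n (comp N P)
  | push Q N, P => push Q (comp N P)
  | pop N, P => pop (comp N (rename Nat.succ P))

/-- Lifting of a substitution under a binder. -/
def liftS (σ : Nat → STm) : Nat → STm
  | 0 => var 0 star
  | n+1 => rename Nat.succ (σ n)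

/-- Capture-avoiding simultaneous substitution; note
`{N/x}(x.M) = N ; {N/x}M`. -/
def subst (σ : Nat → STm) : STm → STm
  | star => star
  | var n M => comp (σ n) (subst σ M)
  | push N M => push (subst σ N) (subst σ M)
  | pop M => pop (subst (liftS σ) M)

/-- Capture-avoiding substitution `{N/x}M` of `N` for the variable bound
immediately outside `M`. -/
def subst1 (N : STm) : STm → STm :=
  subst (fun n => match n with | 0 => N | n+1 => var n star)

end STm

/-- Machine states: a stack of terms (written bottom-first, so the top
element is the last element of the list) together with a term. -/
abbrev SState := List STm × STm

/-- The transitions of the sequential stack machine: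
`(S, [N].M) → (S·N, M)` and `(S·N, <x>.M) → (S, {N/x}M)`. -/
inductive SMStep : SState → SState → Prop
  | push (S : List STm) (N M : STm) : SMStep (S, .push N M) (S ++ [N], M)
  | pop (S : List STm) (N M : STm) : SMStep (S ++ [N], .pop M) (S, STm.subst1 N M)

/-- A run of the sequential machine: a finite sequence of transitions. -/
def SRun : SState → SState → Prop := Relation.ReflTransGen SMStep

/-- Sequential types `ρ_n…ρ_1 ⟹ τ_1…τ_m`: an implication between two
finite vectors of sequential types. The first list is the input vector
as written (i.e. `arr (rev ρ⃗) τ⃗` represents `rev(ρ⃗) ⟹ τ⃗`). -/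
inductive STy : Type
  | arr : List STy → List STy → STy

/-- Typing judgments `Γ ⊢ M : τ` of the sequential λ-calculus, with the
context `Γ` a finite map from (de Bruijn) variables to types, given as a
list. -/
inductive Typing : List STy → STm → STy → Prop
  | star (Γ : List STy) (τs : List STy) :
      Typing Γ .star (.arr τs.reverse τs)
  | var (Γ : List STy) (n : Nat) (M : STm) (ρs σs τs υs : List STy) :
      Γ[n]? = some (.arr ρs.reverse σs) →
      Typing Γ M (.arr (σs.reverse ++ τs.reverse) υs) →
      Typing Γ (.var n M) (.arr (ρs.reverse ++ τs.reverse) υs)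
  | abs (Γ : List STy) (M : STm) (ρ : STy) (σs τs : List STy) :
      Typing (ρ :: Γ) M (.arr σs.reverse τs) →
      Typing Γ (.pop M) (.arr (ρ :: σs.reverse) τs)
  | app (Γ : List STy) (N M : STm) (ρ : STy) (σs τs : List STy) :
      Typing Γ N ρ →
      Typing Γ M (.arr (ρ :: σs.reverse) τs) →
      Typing Γ (.push N M) (.arr σs.reverse τs)

/-! Induction on the derivation of `M`: `M;N` replaces the final `*` of `M`, typed
`rev(σ⃗) ⟹ σ⃗`, by `N`, and every other rule passes the output vector through unchanged.
Under a binder `N` is shifted past the bound variable, so typing must survive weakening. -/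

theorem Typing.rename {Γ Δ : List STy} {M : STm} {τ : STy} {f : Nat → Nat}
    (h : Typing Γ M τ) (hf : ∀ n τ', Γ[n]? = some τ' → Δ[f n]? = some τ') :
    Typing Δ (M.rename f) τ := by
  induction h generalizing Δ f with
  | star _ τs => exact .star Δ τs
  | var _ n _ ρs σs τs υs hn _ ih => exact .var Δ (f n) _ ρs σs τs υs (hf n _ hn) (ih hf)
  | abs _ _ ρ σs τs _ ih =>
    refine .abs Δ _ ρ σs τs (ih ?_)
    rintro (_ | n) τ' h
    · simpa [STm.liftF] using h
    · simpa [STm.liftF] using hf n τ' h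
  | app _ _ _ ρ σs τs _ _ ihN ihM => exact .app Δ _ _ ρ σs τs (ihN hf) (ihM hf)

theorem Typing.weaken {Γ : List STy} {M : STm} {τ : STy} (ρ : STy) (h : Typing Γ M τ) :
    Typing (ρ :: Γ) (M.rename Nat.succ) τ :=
  h.rename fun _ _ hn => by simpa using hn

theorem Typing.comp {Γ : List STy} {M N : STm} {ρs σs τs : List STy}
    (hM : Typing Γ M (.arr ρs σs)) (hN : Typing Γ N (.arr σs.reverse τs)) :
    Typing Γ (M.comp N) (.arr ρs τs) := by
  generalize hτ : STy.arr ρs σs = τ at hM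
  induction hM generalizing ρs σs N τs with
  | star =>
    cases hτ
    simpa [STm.comp] using hN
  | var _ n _ ρs' σs' τs' _ hn _ ih =>
    cases hτ
    exact .var _ n _ ρs' σs' τs' τs hn (ih hN rfl)
  | abs _ _ ρ σs' _ _ ih =>
    cases hτ
    exact .abs _ _ ρ σs' τs (ih (hN.weaken ρ) rfl)
  | app _ Q _ ρ σs' _ hQ _ _ ihM =>
    cases hτ
    exact .app _ Q _ ρ σs' τs hQ (ihM hN rfl)

/-- Strict composition: if `Γ ⊢ M : rev(ρ⃗) ⟹ σ⃗` and `Γ ⊢ N : rev(σ⃗) ⟹ τ⃗`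
then `Γ ⊢ M;N : rev(ρ⃗) ⟹ τ⃗`. -/
theorem seq_strict_composition (Γ : List STy) (M N : STm) (ρs σs τs : List STy)
    (hM : Typing Γ M (.arr ρs.reverse σs)) (hN : Typing Γ N (.arr σs.reverse τs)) :
    Typing Γ (M.comp N) (.arr ρs.reverse τs) :=
  hM.comp hN
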